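/- arXiv:2303.13146 — 2 statements merged into one kernel-verified Lean document; each statement's English description precedes it below -/
import Mathlib

section
/- Let C_r be a nonempty closed subset of a Euclidean space X, let K = {(x,…,x) ∈ X^{r-1} : x ∈ C_r}, and let D_{r-1} be the diagonal subspace of X^{r-1}. Then for every point x = (x,…,x) ∈ K, the limiting normal cone satisfies N_K(x) = j(N_{C_r}(x)) + D_{r-1}^⊥, where j : X → X^{r-1} is the diagonal embedding j(u) = (u,…,u). -/
/-! For `y ∈ Xᵐ` with coordinate mean `ȳ`, the vector `y - j ȳ` is orthogonal to the diagonal, so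
`‖y - j p‖² = ‖y - j ȳ‖² + m ‖ȳ - p‖²`. Hence the projections of `y` onto `K = j(C)` are exactly
the images `j p` of the projections `p` of `ȳ` onto `C`. Averaging the sequences that define a
normal `u` to `K` then shows that `ū` is normal to `C`, while `u - j ū ⊥ D`.

Conversely, for `v ∈ N_C(x)` and `q ⊥ D` one may assume `τₖ → ∞`: moving `xₖ` towards its
projection `zₖ` keeps `zₖ` a projection. Since `q` has mean zero, the points `j xₖ - τₖ⁻¹ q`
still project onto `j zₖ`, and they realise the normal `j v + q`. -/


open Filter Metric
open scoped RealInnerProductSpace Pointwise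

noncomputable section

variable {X : Type*} [NormedAddCommGroup X] [InnerProductSpace ℝ X]

/-- Set-valued metric projection onto `C`. -/
def proj (C : Set X) (x : X) : Set X :=
  {p | p ∈ C ∧ ‖x - p‖ = Metric.infDist x C}

/-- Limiting normal cone to `C` at `x` (empty when `x ∉ C`). -/
def limNormalCone (C : Set X) (x : X) : Set X :=
  {u | x ∈ C ∧ ∃ (τ : ℕ → ℝ) (xs zs : ℕ → X),
    (∀ k, 0 ≤ τ k) ∧ (∀ k, zs k ∈ proj C (xs k)) ∧
    Tendsto xs atTop (nhds x) ∧
    Tendsto (fun k => τ k • (zs k - xs k)) atTop (nhds u)}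

/-- Super-regularity of a set at a point. -/
def SuperRegular (C : Set X) (xb : X) : Prop :=
  ∀ ε > 0, ∃ δ > 0, ∀ y ∈ C ∩ Metric.closedBall xb δ, ∀ z ∈ C ∩ Metric.closedBall xb δ,
    ∀ u ∈ limNormalCone C z, ⟪u, y - z⟫ ≤ ε * ‖u‖ * ‖y - z‖

/-- Diagonal embedding of `X` into the product `PiLp 2 (fun _ : Fin m => X)`. -/
def diagMap (m : ℕ) (u : X) : PiLp 2 (fun _ : Fin m => X) :=
  (WithLp.equiv 2 _).symm (fun _ => u)

/-- The diagonal subspace of the product space. -/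
def diagSub (m : ℕ) (X : Type*) [NormedAddCommGroup X] [InnerProductSpace ℝ X] :
    Submodule ℝ (PiLp 2 (fun _ : Fin m => X)) where
  carrier := {x | ∀ i j, x i = x j}
  add_mem' := by
    intro a b ha hb i j
    show a i + b i = a j + b j
    rw [ha i j, hb i j]
  zero_mem' := by intro i j; rfl
  smul_mem' := by
    intro c a ha i j
    show c • a i = c • a j
    rw [ha i j]

open Topology

set_option linter.unusedSectionVars false

lemma mem_proj_iff {C : Set X} {x p : X} :
    p ∈ proj C x ↔ p ∈ C ∧ ∀ c ∈ C, ‖x - p‖ ≤ ‖x - c‖ := by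
  refine ⟨fun ⟨hp, hd⟩ => ⟨hp, fun c hc => ?_⟩, fun ⟨hp, hle⟩ => ⟨hp, ?_⟩⟩
  · rw [hd, ← dist_eq_norm]
    exact infDist_le_dist_of_mem hc
  · refine le_antisymm ?_ (dist_eq_norm x p ▸ infDist_le_dist_of_mem hp)
    exact (le_infDist ⟨p, hp⟩).2 fun c hc => dist_eq_norm x c ▸ hle c hc

lemma mem_proj_add_smul_sub {C : Set X} {w p : X} (hp : p ∈ proj C w) {t : ℝ}
    (ht₀ : 0 ≤ t) (ht₁ : t ≤ 1) : p ∈ proj C (p + t • (w - p)) := by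
  obtain ⟨hpC, hle⟩ := mem_proj_iff.1 hp
  refine mem_proj_iff.2 ⟨hpC, fun c hc => ?_⟩
  have hnear : ‖p + t • (w - p) - p‖ = t * ‖w - p‖ := by
    rw [add_sub_cancel_left, norm_smul, Real.norm_of_nonneg ht₀]
  have hfar : ‖w - (p + t • (w - p))‖ = (1 - t) * ‖w - p‖ := by
    rw [show w - (p + t • (w - p)) = (1 - t) • (w - p) by module, norm_smul,
      Real.norm_of_nonneg (by linarith)]
  have htri := norm_sub_le_norm_sub_add_norm_sub w (p + t • (w - p)) c
  rw [hnear]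
  linarith [hle c hc]

lemma exists_tendsto_atTop_of_mem_limNormalCone {C : Set X} {x u : X}
    (hu : u ∈ limNormalCone C x) :
    ∃ (τ : ℕ → ℝ) (xs zs : ℕ → X), (∀ k, 0 < τ k) ∧ Tendsto τ atTop atTop ∧
      (∀ k, zs k ∈ proj C (xs k)) ∧ Tendsto xs atTop (𝓝 x) ∧
      Tendsto (fun k => τ k • (zs k - xs k)) atTop (𝓝 u) := by
  obtain ⟨hx, τ, ws, ps, hτ, hps, hws, hlim⟩ := hu
  set σ : ℕ → ℝ := fun k => τ k + (k + 1)
  have hσ : ∀ k, 0 < σ k := fun k => by positivity [hτ k]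
  -- `σ k * t k = τ k`, so moving `ws k` towards `ps k` by the factor `t k` keeps the normals.
  set t : ℕ → ℝ := fun k => τ k / σ k
  have ht₀ : ∀ k, 0 ≤ t k := fun k => div_nonneg (hτ k) (hσ k).le
  have ht₁ : ∀ k, t k ≤ 1 := fun k => (div_le_one (hσ k)).2 (by simp only [σ]; linarith)
  have hgap : Tendsto (fun k => ws k - ps k) atTop (𝓝 0) := by
    refine squeeze_zero_norm (fun k => ?_) (tendsto_iff_dist_tendsto_zero.1 hws)
    rw [(hps k).2]
    exact infDist_le_dist_of_mem hx
  refine ⟨σ, fun k => ps k + t k • (ws k - ps k), ps, hσ, ?_,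
    fun k => mem_proj_add_smul_sub (hps k) (ht₀ k) (ht₁ k), ?_, ?_⟩
  · exact tendsto_atTop_add_left_of_le _ 0 hτ
      (tendsto_atTop_add_const_right _ 1 tendsto_natCast_atTop_atTop)
  · have hsmall : Tendsto (fun k => t k • (ws k - ps k)) atTop (𝓝 0) := by
      refine squeeze_zero_norm (fun k => ?_) (tendsto_zero_iff_norm_tendsto_zero.1 hgap)
      rw [norm_smul, Real.norm_of_nonneg (ht₀ k)]
      exact mul_le_of_le_one_left (norm_nonneg _) (ht₁ k)
    simpa using (hws.sub hgap).add hsmall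
  · refine hlim.congr fun k => ?_
    rw [sub_add_cancel_left, smul_neg, smul_smul, mul_div_cancel₀ _ (hσ k).ne', ← smul_neg,
      neg_sub]

variable {m : ℕ}

def meanMap (m : ℕ) : PiLp 2 (fun _ : Fin m => X) →L[ℝ] X :=
  (m : ℝ)⁻¹ • ∑ i, PiLp.proj 2 (fun _ : Fin m => X) i

lemma meanMap_apply (y : PiLp 2 (fun _ : Fin m => X)) :
    meanMap m y = (m : ℝ)⁻¹ • ∑ i, y i := by
  simp [meanMap]

lemma diagMap_apply (u : X) (i : Fin m) : diagMap m u i = u := rfl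

lemma diagMap_mem_diagSub (u : X) : diagMap m u ∈ diagSub m X := fun _ _ => rfl

lemma diagMap_injective (hm : m ≠ 0) : Function.Injective (diagMap (X := X) m) :=
  fun _ _ h => congrArg (· ⟨0, Nat.pos_of_ne_zero hm⟩) h

lemma diagMap_sub (a b : X) : diagMap m (a - b) = diagMap m a - diagMap m b := rfl

lemma diagMap_smul (c : ℝ) (a : X) : diagMap m (c • a) = c • diagMap m a := rfl

lemma continuous_diagMap : Continuous (diagMap (X := X) m) :=
  (PiLp.continuous_toLp 2 _).comp (continuous_pi fun _ => continuous_id)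

lemma meanMap_diagMap (hm : m ≠ 0) (u : X) : meanMap m (diagMap m u) = u := by
  simp [meanMap_apply, diagMap_apply, ← Nat.cast_smul_eq_nsmul ℝ, smul_smul, hm]

lemma inner_diagMap_left (a : X) (v : PiLp 2 (fun _ : Fin m => X)) :
    ⟪diagMap m a, v⟫ = ⟪a, ∑ i, v i⟫ := by
  simp [PiLp.inner_apply, diagMap_apply, inner_sum]

lemma norm_diagMap_sq (u : X) : ‖diagMap m u‖ ^ 2 = m * ‖u‖ ^ 2 := by
  simp [PiLp.norm_sq_eq_of_L2, diagMap_apply]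

lemma mem_diagSub_orthogonal_iff (hm : m ≠ 0) (v : PiLp 2 (fun _ : Fin m => X)) :
    v ∈ (diagSub m X)ᗮ ↔ ∑ i, v i = 0 := by
  refine ⟨fun hv => ?_, fun hv => (Submodule.mem_orthogonal _ v).2 fun w hw => ?_⟩
  · have := (Submodule.mem_orthogonal _ v).1 hv _ (diagMap_mem_diagSub (∑ i, v i))
    rwa [inner_diagMap_left, inner_self_eq_zero] at this
  · have hw_diag : w = diagMap m (w ⟨0, Nat.pos_of_ne_zero hm⟩) := PiLp.ext fun i => hw _ _
    rw [hw_diag, inner_diagMap_left, hv, inner_zero_right]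

lemma sub_diagMap_meanMap_mem_orthogonal (hm : m ≠ 0) (y : PiLp 2 (fun _ : Fin m => X)) :
    y - diagMap m (meanMap m y) ∈ (diagSub m X)ᗮ := by
  rw [mem_diagSub_orthogonal_iff hm]
  simp [Finset.sum_sub_distrib, diagMap_apply, meanMap_apply, ← Nat.cast_smul_eq_nsmul ℝ,
    smul_smul, hm]

lemma norm_sub_diagMap_sq (hm : m ≠ 0) (y : PiLp 2 (fun _ : Fin m => X)) (p : X) :
    ‖y - diagMap m p‖ ^ 2 = ‖y - diagMap m (meanMap m y)‖ ^ 2 + m * ‖meanMap m y - p‖ ^ 2 := by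
  have horth : ⟪y - diagMap m (meanMap m y), diagMap m (meanMap m y - p)⟫ = 0 :=
    (Submodule.mem_orthogonal' _ _).1 (sub_diagMap_meanMap_mem_orthogonal hm y) _
      (diagMap_mem_diagSub _)
  have hsplit : y - diagMap m p = (y - diagMap m (meanMap m y)) + diagMap m (meanMap m y - p) := by
    rw [diagMap_sub]; abel
  rw [hsplit, norm_add_sq_real, horth, norm_diagMap_sq]
  ring

lemma norm_sub_diagMap_le_iff (hm : m ≠ 0) (y : PiLp 2 (fun _ : Fin m => X)) (p c : X) :
    ‖y - diagMap m p‖ ≤ ‖y - diagMap m c‖ ↔ ‖meanMap m y - p‖ ≤ ‖meanMap m y - c‖ := by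
  have hm' : (0 : ℝ) < m := by exact_mod_cast Nat.pos_of_ne_zero hm
  rw [← sq_le_sq₀ (norm_nonneg _) (norm_nonneg _), norm_sub_diagMap_sq hm y p,
    norm_sub_diagMap_sq hm y c, add_le_add_iff_left, mul_le_mul_iff_right₀ hm',
    sq_le_sq₀ (norm_nonneg _) (norm_nonneg _)]

lemma proj_diagMap_image (hm : m ≠ 0) (C : Set X) (y : PiLp 2 (fun _ : Fin m => X)) :
    proj (diagMap m '' C) y = diagMap m '' proj C (meanMap m y) := by
  ext z
  constructor
  · intro hz
    obtain ⟨⟨p, hp, rfl⟩, hle⟩ := mem_proj_iff.1 hz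
    refine ⟨p, mem_proj_iff.2 ⟨hp, fun c hc => ?_⟩, rfl⟩
    exact (norm_sub_diagMap_le_iff hm y p c).1 (hle _ ⟨c, hc, rfl⟩)
  · rintro ⟨p, hp, rfl⟩
    obtain ⟨hpC, hle⟩ := mem_proj_iff.1 hp
    refine mem_proj_iff.2 ⟨⟨p, hpC, rfl⟩, Set.forall_mem_image.2 fun c hc => ?_⟩
    exact (norm_sub_diagMap_le_iff hm y p c).2 (hle c hc)

lemma limNormalCone_diagMap_image_subset (hm : m ≠ 0) (C : Set X) (x : X) :
    limNormalCone (diagMap m '' C) (diagMap m x)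
      ⊆ diagMap m '' limNormalCone C x + ((diagSub m X)ᗮ : Set _) := by
  rintro u ⟨⟨x', hx', hxx'⟩, τ, ys, zs, hτ, hzs, hys, hlim⟩
  have hx : x ∈ C := diagMap_injective hm hxx' ▸ hx'
  simp_rw [proj_diagMap_image hm] at hzs
  choose ps hps hzps using hzs
  have hmean : meanMap m u ∈ limNormalCone C x := by
    refine ⟨hx, τ, fun k => meanMap m (ys k), ps, hτ, hps, ?_, ?_⟩
    · simpa only [Function.comp_def, meanMap_diagMap hm] using
        ((meanMap m).continuous.tendsto _).comp hys
    · refine ((meanMap m).continuous.tendsto u).comp hlim |>.congr fun k => ?_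
      simp only [Function.comp_apply, ← hzps, map_smul, map_sub, meanMap_diagMap hm]
  exact ⟨_, ⟨_, hmean, rfl⟩, _, sub_diagMap_meanMap_mem_orthogonal hm u, add_sub_cancel _ _⟩

lemma diagMap_image_limNormalCone_add_subset (hm : m ≠ 0) (C : Set X) (x : X) :
    diagMap m '' limNormalCone C x + ((diagSub m X)ᗮ : Set _)
      ⊆ limNormalCone (diagMap m '' C) (diagMap m x) := by
  rintro _ ⟨_, ⟨v, hv, rfl⟩, q, hq, rfl⟩
  obtain ⟨τ, ws, ps, hτ, hτ_top, hps, hws, hlim⟩ := exists_tendsto_atTop_of_mem_limNormalCone hv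
  have hq_mean : meanMap m q = 0 := by
    rw [meanMap_apply, (mem_diagSub_orthogonal_iff hm q).1 hq, smul_zero]
  refine ⟨⟨x, hv.1, rfl⟩, τ, fun k => diagMap m (ws k) - (τ k)⁻¹ • q, fun k => diagMap m (ps k),
    fun k => (hτ k).le, fun k => ?_, ?_, ?_⟩
  · rw [proj_diagMap_image hm, map_sub, map_smul, hq_mean, smul_zero, sub_zero,
      meanMap_diagMap hm]
    exact Set.mem_image_of_mem _ (hps k)
  · simpa using ((continuous_diagMap.tendsto x).comp hws).sub
      (hτ_top.inv_tendsto_atTop.smul_const q)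
  · refine ((continuous_diagMap.tendsto v).comp hlim).add_const q |>.congr fun k => ?_
    rw [Function.comp_apply, diagMap_smul, diagMap_sub, sub_sub_eq_add_sub, add_sub_right_comm,
      smul_add, smul_inv_smul₀ (hτ k).ne']

theorem limNormalCone_diagMap_image (hm : m ≠ 0) (C : Set X) (x : X) :
    limNormalCone (diagMap m '' C) (diagMap m x)
      = diagMap m '' limNormalCone C x + ((diagSub m X)ᗮ : Set _) :=
  (limNormalCone_diagMap_image_subset hm C x).antisymm
    (diagMap_image_limNormalCone_add_subset hm C x)

theorem stmt5_general (r : ℕ) (hr : 2 ≤ r)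
    (Cr : Set X) (x : X) :
    limNormalCone {y : PiLp 2 (fun _ : Fin (r - 1) => X) | ∃ a ∈ Cr, ∀ i, y i = a}
        (diagMap (r - 1) x)
      = diagMap (r - 1) '' limNormalCone Cr x
          + (((diagSub (r - 1) X)ᗮ : Submodule ℝ _) : Set _) := by
  have hK : {y : PiLp 2 (fun _ : Fin (r - 1) => X) | ∃ a ∈ Cr, ∀ i, y i = a}
      = diagMap (r - 1) '' Cr := by
    ext y
    constructor
    · rintro ⟨a, ha, hy⟩
      exact ⟨a, ha, PiLp.ext fun i => (hy i).symm⟩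
    · rintro ⟨a, ha, rfl⟩
      exact ⟨a, ha, diagMap_apply a⟩
  rw [hK]
  exact limNormalCone_diagMap_image (by omega) Cr x

theorem stmt5 (r : ℕ) (hr : 2 ≤ r)
    (Cr : Set X) (hne : Cr.Nonempty) (hcl : IsClosed Cr)
    (x : X) (hx : x ∈ Cr) :
    limNormalCone {y : PiLp 2 (fun _ : Fin (r - 1) => X) | ∃ a ∈ Cr, ∀ i, y i = a}
        (diagMap (r - 1) x)
      = diagMap (r - 1) '' limNormalCone Cr x
          + (((diagSub (r - 1) X)ᗮ : Submodule ℝ _) : Set _) :=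
  stmt5_general r hr Cr x
end
end

section
/- Let C₁,…,C_r ⊆ X be nonempty closed sets whose collection is strongly regular at x̄ ∈ X. Let B = C₁ × ⋯ × C_{r-1} and K = {(x,…,x) : x ∈ C_r} in X^{r-1}, and assume P_{C_r}(q) is nonempty for all q (closedness suffices). Then {B, K} is strongly regular at the diagonal point (x̄,…,x̄): if v ∈ N_B((x̄,…,x̄)) and w ∈ N_K((x̄,…,x̄)) satisfy v + w = 0, then v = w = 0. -/
/-!
A limiting normal to the product set `B` is, coordinatewise, a limiting normal to the factors,
because the metric projection onto a product is the product of the projections. A limiting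
normal `w` to the diagonal copy `K` of `C_r` has coordinate sum in `N_{C_r}(x̄)`: by Pythagoras,
`dist x (c,…,c)² = dist x (m,…,m)² + n‖m - c‖²` with `m` the average of the coordinates of `x`,
so projecting `x` onto `K` amounts to projecting `m` onto `C_r`, and the proximal normals
`σ((a,…,a) - x)` sum to `nσ(a - m)`. Strong regularity of `C₁,…,C_r` applied to
`(v₁,…,v_{r-1}, Σ wᵢ)` then forces `v = 0`, hence `w = -v = 0`.
-/

open Filter Metric
open scoped RealInnerProductSpace Pointwise

noncomputable section

variable {X : Type*} [NormedAddCommGroup X] [InnerProductSpace ℝ X]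

theorem mem_proj_iff_s9 {E : Type*} [NormedAddCommGroup E] {C : Set E} {x z : E} :
    z ∈ proj C x ↔ z ∈ C ∧ ∀ y ∈ C, dist x z ≤ dist x y := by
  simp only [proj, Set.mem_ofPred_eq, ← dist_eq_norm]
  refine and_congr_right fun hz =>
    ⟨fun h y hy => h.trans_le (infDist_le_dist_of_mem hy), fun h => ?_⟩
  exact le_antisymm ((le_infDist ⟨z, hz⟩).2 h) (infDist_le_dist_of_mem hz)

section Product

variable {ι : Type*} [Fintype ι] {E : ι → Type*} [∀ i, NormedAddCommGroup (E i)]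

theorem apply_mem_proj_of_mem_proj_pi {C : ∀ i, Set (E i)} {x z : PiLp 2 E}
    (hz : z ∈ proj {y : PiLp 2 E | ∀ i, y i ∈ C i} x) (i : ι) :
    z i ∈ proj (C i) (x i) := by
  classical
  rw [mem_proj_iff_s9] at hz ⊢
  refine ⟨hz.1 i, fun y hy => ?_⟩
  set z' : PiLp 2 E := WithLp.toLp 2 (Function.update z i y)
  have hz' : ∀ j, z' j ∈ C j := fun j => by
    rcases eq_or_ne j i with rfl | hj
    · simpa [z'] using hy
    · simpa [z', hj] using hz.1 j
  have hrest : ∑ j ∈ {i}ᶜ, dist (x j) (z' j) ^ 2 = ∑ j ∈ {i}ᶜ, dist (x j) (z j) ^ 2 :=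
    Finset.sum_congr rfl fun j hj => by
      simp [z', Function.update_of_ne (Finset.notMem_singleton.1 (Finset.mem_compl.1 hj))]
  have hsq := pow_le_pow_left₀ dist_nonneg (hz.2 z' hz') 2
  rw [PiLp.dist_sq_eq_of_L2, PiLp.dist_sq_eq_of_L2, Fintype.sum_eq_add_sum_compl i,
    Fintype.sum_eq_add_sum_compl i, hrest, add_le_add_iff_right] at hsq
  simpa [z', pow_le_pow_iff_left₀ dist_nonneg dist_nonneg two_ne_zero] using hsq

theorem apply_mem_limNormalCone_pi [∀ i, InnerProductSpace ℝ (E i)] {C : ∀ i, Set (E i)}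
    {x v : PiLp 2 E}
    (hv : v ∈ limNormalCone {y : PiLp 2 E | ∀ i, y i ∈ C i} x) (i : ι) :
    v i ∈ limNormalCone (C i) (x i) := by
  obtain ⟨hx, τ, xs, zs, hτ, hzs, hxs, hlim⟩ := hv
  exact ⟨hx i, τ, fun k => xs k i, fun k => zs k i, hτ,
    fun k => apply_mem_proj_of_mem_proj_pi (hzs k) i,
    ((PiLp.continuous_apply 2 E i).tendsto x).comp hxs,
    ((PiLp.continuous_apply 2 E i).tendsto v).comp hlim⟩

end Product

section Diagonal

variable {ι : Type*} [Fintype ι]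

def avg (x : PiLp 2 fun _ : ι => X) : X :=
  (Fintype.card ι : ℝ)⁻¹ • ∑ i, x i

theorem continuous_avg : Continuous (avg : (PiLp 2 fun _ : ι => X) → X) :=
  (continuous_finsetSum _ fun i _ => PiLp.continuous_apply 2 _ i).const_smul _

variable [Nonempty ι]

theorem card_smul_avg (x : PiLp 2 fun _ : ι => X) :
    (Fintype.card ι : ℝ) • avg x = ∑ i, x i :=
  smul_inv_smul₀ (Nat.cast_ne_zero.2 Fintype.card_ne_zero) _

theorem avg_const (c : X) : avg (WithLp.toLp 2 fun _ : ι => c) = c := by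
  simp [avg, ← Nat.cast_smul_eq_nsmul ℝ, Fintype.card_ne_zero]

theorem dist_sq_const_eq (x : PiLp 2 fun _ : ι => X) (c : X) :
    dist x (WithLp.toLp 2 fun _ => c) ^ 2 =
      dist x (WithLp.toLp 2 fun _ => avg x) ^ 2 + Fintype.card ι * dist (avg x) c ^ 2 := by
  have hcentered : ∑ i, (x i - avg x) = 0 := by
    rw [Finset.sum_sub_distrib, Finset.sum_const, Finset.card_univ,
      ← Nat.cast_smul_eq_nsmul ℝ, card_smul_avg, sub_self]
  have hsplit : ∀ i, dist (x i) c ^ 2 =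
      dist (x i) (avg x) ^ 2 + 2 * ⟪x i - avg x, avg x - c⟫ + dist (avg x) c ^ 2 := fun i => by
    simp only [dist_eq_norm, ← norm_add_sq_real, sub_add_sub_cancel]
  simp only [PiLp.dist_sq_eq_of_L2, hsplit, Finset.sum_add_distrib,
    ← Finset.mul_sum, ← sum_inner, hcentered, inner_zero_left, mul_zero, add_zero,
    Finset.sum_const, Finset.card_univ, nsmul_eq_mul]

theorem exists_avg_mem_proj_of_mem_proj_diag {C : Set X} {x z : PiLp 2 fun _ : ι => X}
    (hz : z ∈ proj {y : PiLp 2 (fun _ : ι => X) | ∃ a ∈ C, ∀ i, y i = a} x) :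
    ∃ a, (∀ i, z i = a) ∧ a ∈ proj C (avg x) := by
  rw [mem_proj_iff_s9] at hz
  obtain ⟨⟨a, ha, hza⟩, hmin⟩ := hz
  have hz_eq : z = WithLp.toLp 2 fun _ => a := PiLp.ext hza
  refine ⟨a, hza, mem_proj_iff_s9.2 ⟨ha, fun b hb => ?_⟩⟩
  have hsq := pow_le_pow_left₀ dist_nonneg
    (hmin (WithLp.toLp 2 fun _ => b) ⟨b, hb, fun _ => rfl⟩) 2
  rw [hz_eq, dist_sq_const_eq x a, dist_sq_const_eq x b, add_le_add_iff_left,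
    mul_le_mul_iff_right₀ (Nat.cast_pos.2 Fintype.card_pos)] at hsq
  exact (pow_le_pow_iff_left₀ dist_nonneg dist_nonneg two_ne_zero).1 hsq

theorem sum_mem_limNormalCone_of_mem_diag {C : Set X} {c : X} {w : PiLp 2 fun _ : ι => X}
    (hw : w ∈ limNormalCone {y : PiLp 2 (fun _ : ι => X) | ∃ a ∈ C, ∀ i, y i = a}
      (WithLp.toLp 2 fun _ => c)) :
    ∑ i, w i ∈ limNormalCone C c := by
  obtain ⟨⟨a₀, ha₀, hca₀⟩, σ, ys, ws, hσ, hws, hys, hlim⟩ := hw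
  choose a hwa hproj using fun k => exists_avg_mem_proj_of_mem_proj_diag (hws k)
  have hc : c = a₀ := hca₀ (Classical.arbitrary ι)
  refine ⟨hc ▸ ha₀, fun k => Fintype.card ι * σ k,
    fun k => avg (ys k), a, fun k => mul_nonneg (Nat.cast_nonneg _) (hσ k), hproj, ?_, ?_⟩
  · have hm := (continuous_avg.tendsto _).comp hys
    rwa [avg_const] at hm
  · refine (((continuous_finsetSum _ fun i _ => PiLp.continuous_apply 2 _ i).tendsto w).comp
      hlim).congr fun k => ?_
    simp only [Function.comp_apply, PiLp.smul_apply, PiLp.sub_apply, ← Finset.smul_sum,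
      Finset.sum_sub_distrib, hwa, Finset.sum_const, Finset.card_univ, ← Nat.cast_smul_eq_nsmul ℝ]
    rw [← card_smul_avg, ← smul_sub, smul_smul, mul_comm]

end Diagonal

theorem stmt9_general (r : ℕ) (hr : 2 ≤ r)
    (C : Fin (r - 1) → Set X) (Cr : Set X)
    (xb : X)
    (hsr : ∀ (u : Fin (r - 1) → X) (ur : X),
      (∀ i, u i ∈ limNormalCone (C i) xb) → ur ∈ limNormalCone Cr xb →
      (∑ i, u i) + ur = 0 → (∀ i, u i = 0) ∧ ur = 0) :
    ∀ v ∈ limNormalCone {y : PiLp 2 (fun _ : Fin (r - 1) => X) | ∀ i, y i ∈ C i}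
        (diagMap (r - 1) xb),
    ∀ w ∈ limNormalCone {y : PiLp 2 (fun _ : Fin (r - 1) => X) | ∃ a ∈ Cr, ∀ i, y i = a}
        (diagMap (r - 1) xb),
      v + w = 0 → v = 0 ∧ w = 0 := by
  intro v hv w hw hvw
  have : Nonempty (Fin (r - 1)) := ⟨⟨0, by omega⟩⟩
  have hvw_apply : ∀ i, v i + w i = 0 := fun i => by simpa using congrArg (· i) hvw
  obtain ⟨hv0, -⟩ := hsr (fun i => v i) (∑ i, w i) (apply_mem_limNormalCone_pi hv)
    (sum_mem_limNormalCone_of_mem_diag hw) (by rw [← Finset.sum_add_distrib]; simp [hvw_apply])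
  have hv0 : v = 0 := PiLp.ext hv0
  exact ⟨hv0, by simpa [hv0] using hvw⟩

theorem stmt9 (r : ℕ) (hr : 2 ≤ r)
    (C : Fin (r - 1) → Set X) (Cr : Set X)
    (hne : ∀ i, (C i).Nonempty) (hcl : ∀ i, IsClosed (C i))
    (hner : Cr.Nonempty) (hclr : IsClosed Cr)
    (xb : X)
    (hsr : ∀ (u : Fin (r - 1) → X) (ur : X),
      (∀ i, u i ∈ limNormalCone (C i) xb) → ur ∈ limNormalCone Cr xb →
      (∑ i, u i) + ur = 0 → (∀ i, u i = 0) ∧ ur = 0) :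
    ∀ v ∈ limNormalCone {y : PiLp 2 (fun _ : Fin (r - 1) => X) | ∀ i, y i ∈ C i}
        (diagMap (r - 1) xb),
    ∀ w ∈ limNormalCone {y : PiLp 2 (fun _ : Fin (r - 1) => X) | ∃ a ∈ Cr, ∀ i, y i = a}
        (diagMap (r - 1) xb),
      v + w = 0 → v = 0 ∧ w = 0 :=
  stmt9_general r hr C Cr xb hsr
end
end
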